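/- arXiv:math/0408009 — 4 statements merged into one kernel-verified Lean document; each statement's English description precedes it below -/
import Mathlib

section
/- Every matrix of the form η(w₁,w₂) from equation (3.3) (with entries built bilinearly from real numbers w₁, w₂ and two 1-form placeholders a¹, a² replaced by real numbers) lies in the Lie algebra 𝔤 of the signature-(4,2) orthogonal group, and any two such matrices commute. -/
/-- The matrix of the signature-(4,2) form. -/
noncomputable def gM : Matrix (Fin 6) (Fin 6) ℝ :=
  !![0,0,0,0,0,-1;
     0,0,0,0,-1,0;
     0,0,1,0,0,0;
     0,0,0,1,0,0;
     0,-1,0,0,0,0;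
     -1,0,0,0,0,0]

/-- The matrix `η(w₁,w₂)` of (3.3), evaluated with the 1-form placeholders `α¹, α²`
replaced by the real numbers `a₁, a₂`. -/
noncomputable def etaM (w₁ w₂ a₁ a₂ : ℝ) : Matrix (Fin 6) (Fin 6) ℝ :=
  !![0,0,0,w₁*a₁, -w₂*a₁ + w₁*a₂, 0;
     0,0,w₂*a₂,0,0, w₂*a₁ - w₁*a₂;
     0,0,0,0, w₂*a₂, 0;
     0,0,0,0,0, w₁*a₁;
     0,0,0,0,0,0;
     0,0,0,0,0,0]

lemma fin2 : (2:Fin 6) = Fin.succ (Fin.succ 0) := rfl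
lemma fin3 : (3:Fin 6) = Fin.succ (Fin.succ (Fin.succ 0)) := rfl
lemma fin4 : (4:Fin 6) = Fin.succ (Fin.succ (Fin.succ (Fin.succ 0))) := rfl
lemma fin5 : (5:Fin 6) = Fin.succ (Fin.succ (Fin.succ (Fin.succ (Fin.succ 0)))) := rfl

set_option maxHeartbeats 4000000 in
/-- Every matrix `η(w₁,w₂)` lies in the Lie algebra `𝔤` of the signature-(4,2) orthogonal
group, and any two such matrices commute. -/
theorem stmt_4 :
    (∀ w₁ w₂ a₁ a₂ : ℝ, (etaM w₁ w₂ a₁ a₂).transpose * gM + gM * etaM w₁ w₂ a₁ a₂ = 0) ∧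
    (∀ w₁ w₂ a₁ a₂ w₁' w₂' a₁' a₂' : ℝ,
      etaM w₁ w₂ a₁ a₂ * etaM w₁' w₂' a₁' a₂' = etaM w₁' w₂' a₁' a₂' * etaM w₁ w₂ a₁ a₂) := by
  constructor <;> intros <;> ext i j <;> fin_cases i <;> fin_cases j <;>
    simp [Matrix.mul_apply, Fin.sum_univ_six, etaM, gM, fin2, fin3, fin4, fin5, Matrix.vecHead, Matrix.vecTail] <;> ring
end

section
/- If ψ, A, B, R are smooth functions on a connected open set U ⊆ ℝ² satisfying dA = (R - 3Aψ_u)du + (3ce^ψψ_u - Aψ_v)dv and dB = (3ce^ψψ_v - Bψ_u)du - (R + 3Bψ_v)dv and the Liouville equation ψ_{uv} = (1-c)e^{2ψ}, and R satisfies R_u = -Rψ_u - 2(1-c)e^{2ψ}B - 3ce^ψ(ψ_{vv} + 4ψ_v²) and R_v = -Rψ_v + 2(1-c)e^{2ψ}A + 3ce^ψ(ψ_{uu} + 4ψ_u²), then the equality of mixed partials R_{uv} = R_{vu} implies 3ce^ψ(ψ_{uuu} + ψ_{vvv} + 10ψ_uψ_{uu} + 10ψ_vψ_{vv} + 8(ψ_u³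 + ψ_v³)) = 0. -/
/-- Partial derivative in the `u`-direction on `ℝ × ℝ`. -/
noncomputable def pd1 (f : ℝ × ℝ → ℝ) (p : ℝ × ℝ) : ℝ := fderiv ℝ f p (1, 0)

/-- Partial derivative in the `v`-direction on `ℝ × ℝ`. -/
noncomputable def pd2 (f : ℝ × ℝ → ℝ) (p : ℝ × ℝ) : ℝ := fderiv ℝ f p (0, 1)

section rules
variable {f g : ℝ × ℝ → ℝ} {p w : ℝ × ℝ} {a : ℝ}

theorem pdw_add (hf : DifferentiableAt ℝ f p) (hg : DifferentiableAt ℝ g p) :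
    fderiv ℝ (fun x => f x + g x) p w = fderiv ℝ f p w + fderiv ℝ g p w := by
  rw [fderiv_fun_add hf hg]; rfl
theorem pdw_sub (hf : DifferentiableAt ℝ f p) (hg : DifferentiableAt ℝ g p) :
    fderiv ℝ (fun x => f x - g x) p w = fderiv ℝ f p w - fderiv ℝ g p w := by
  rw [fderiv_fun_sub hf hg]; rfl
theorem pdw_neg : fderiv ℝ (fun x => -f x) p w = -fderiv ℝ f p w := by
  rw [fderiv_fun_neg]; rfl
theorem pdw_mul (hf : DifferentiableAt ℝ f p) (hg : DifferentiableAt ℝ g p) :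
    fderiv ℝ (fun x => f x * g x) p w = f p * fderiv ℝ g p w + g p * fderiv ℝ f p w := by
  rw [fderiv_fun_mul hf hg]; simp
theorem pdw_const_mul (hf : DifferentiableAt ℝ f p) :
    fderiv ℝ (fun x => a * f x) p w = a * fderiv ℝ f p w := by
  rw [fderiv_const_mul hf]; simp
theorem pdw_exp (hf : DifferentiableAt ℝ f p) :
    fderiv ℝ (fun x => Real.exp (f x)) p w = Real.exp (f p) * fderiv ℝ f p w := by
  rw [fderiv_exp hf]; simp
theorem pdw_sq (hf : DifferentiableAt ℝ f p) :
    fderiv ℝ (fun x => (f x) ^ 2) p w = 2 * f p * fderiv ℝ f p w := by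
  have : (fun x => (f x) ^ 2) = fun x => f x * f x := by ext x; ring
  rw [this, pdw_mul hf hf]; ring
theorem pdw_const : fderiv ℝ (fun _ : ℝ × ℝ => a) p w = 0 := by
  rw [fderiv_fun_const]; simp

theorem pd2_add (hf : DifferentiableAt ℝ f p) (hg : DifferentiableAt ℝ g p) :
    pd2 (fun x => f x + g x) p = pd2 f p + pd2 g p := pdw_add hf hg
theorem pd2_sub (hf : DifferentiableAt ℝ f p) (hg : DifferentiableAt ℝ g p) :
    pd2 (fun x => f x - g x) p = pd2 f p - pd2 g p := pdw_sub hf hg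
theorem pd2_neg : pd2 (fun x => -f x) p = -pd2 f p := pdw_neg
theorem pd2_mul (hf : DifferentiableAt ℝ f p) (hg : DifferentiableAt ℝ g p) :
    pd2 (fun x => f x * g x) p = f p * pd2 g p + g p * pd2 f p := pdw_mul hf hg
theorem pd2_const_mul (hf : DifferentiableAt ℝ f p) :
    pd2 (fun x => a * f x) p = a * pd2 f p := pdw_const_mul hf
theorem pd2_exp (hf : DifferentiableAt ℝ f p) :
    pd2 (fun x => Real.exp (f x)) p = Real.exp (f p) * pd2 f p := pdw_exp hf
theorem pd2_sq (hf : DifferentiableAt ℝ f p) :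
    pd2 (fun x => (f x) ^ 2) p = 2 * f p * pd2 f p := pdw_sq hf
theorem pd2_const : pd2 (fun _ : ℝ × ℝ => a) p = 0 := pdw_const

theorem pd1_add (hf : DifferentiableAt ℝ f p) (hg : DifferentiableAt ℝ g p) :
    pd1 (fun x => f x + g x) p = pd1 f p + pd1 g p := pdw_add hf hg
theorem pd1_sub (hf : DifferentiableAt ℝ f p) (hg : DifferentiableAt ℝ g p) :
    pd1 (fun x => f x - g x) p = pd1 f p - pd1 g p := pdw_sub hf hg
theorem pd1_neg : pd1 (fun x => -f x) p = -pd1 f p := pdw_neg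
theorem pd1_mul (hf : DifferentiableAt ℝ f p) (hg : DifferentiableAt ℝ g p) :
    pd1 (fun x => f x * g x) p = f p * pd1 g p + g p * pd1 f p := pdw_mul hf hg
theorem pd1_const_mul (hf : DifferentiableAt ℝ f p) :
    pd1 (fun x => a * f x) p = a * pd1 f p := pdw_const_mul hf
theorem pd1_exp (hf : DifferentiableAt ℝ f p) :
    pd1 (fun x => Real.exp (f x)) p = Real.exp (f p) * pd1 f p := pdw_exp hf
theorem pd1_sq (hf : DifferentiableAt ℝ f p) :
    pd1 (fun x => (f x) ^ 2) p = 2 * f p * pd1 f p := pdw_sq hf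
theorem pd1_const : pd1 (fun _ : ℝ × ℝ => a) p = 0 := pdw_const

/-- Symmetry of second partial derivatives for `C³` functions. -/
theorem pd_swap (hf : ContDiff ℝ 3 f) (p : ℝ × ℝ) : pd1 (pd2 f) p = pd2 (pd1 f) p := by
  have h1 : DifferentiableAt ℝ (fderiv ℝ f) p :=
    ((hf.fderiv_right (m := 2) (by norm_num)).differentiable (by norm_num)).differentiableAt
  have e1 : pd1 (pd2 f) p = fderiv ℝ (fderiv ℝ f) p (1,0) (0,1) := by
    show fderiv ℝ (fun q => fderiv ℝ f q (0,1)) p (1,0) = _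
    rw [fderiv_clm_apply h1 (differentiableAt_const _)]
    simp
  have e2 : pd2 (pd1 f) p = fderiv ℝ (fderiv ℝ f) p (0,1) (1,0) := by
    show fderiv ℝ (fun q => fderiv ℝ f q (1,0)) p (0,1) = _
    rw [fderiv_clm_apply h1 (differentiableAt_const _)]
    simp
  rw [e1, e2]
  exact hf.contDiffAt.isSymmSndFDerivAt (by norm_num) _ _

end rules

/-- If `ψ, A, B, R` satisfy the system (4.9)–(4.10) together with the Liouville equation
`ψ_{uv} = (1-c)e^{2ψ}`, then the equality of mixed partials of `R` implies
`3ce^ψ(ψ_{uuu} + ψ_{vvv} + 10ψ_uψ_{uu} + 10ψ_vψ_{vv} + 8(ψ_u³ + ψ_v³)) = 0`. -/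
theorem stmt_8 (c : ℝ) (U : Set (ℝ × ℝ)) (hUopen : IsOpen U) (hUconn : IsConnected U)
    (ψ A B R : ℝ × ℝ → ℝ)
    (hψ : ContDiff ℝ 3 ψ) (hA : ContDiff ℝ 3 A) (hB : ContDiff ℝ 3 B) (hR : ContDiff ℝ 3 R)
    (hAu : ∀ p ∈ U, pd1 A p = R p - 3 * A p * pd1 ψ p)
    (hAv : ∀ p ∈ U, pd2 A p = 3 * c * Real.exp (ψ p) * pd1 ψ p - A p * pd2 ψ p)
    (hBu : ∀ p ∈ U, pd1 B p = 3 * c * Real.exp (ψ p) * pd2 ψ p - B p * pd1 ψ p)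
    (hBv : ∀ p ∈ U, pd2 B p = -(R p + 3 * B p * pd2 ψ p))
    (hLiouville : ∀ p ∈ U, pd2 (pd1 ψ) p = (1 - c) * Real.exp (2 * ψ p))
    (hRu : ∀ p ∈ U, pd1 R p = -(R p) * pd1 ψ p - 2 * (1 - c) * Real.exp (2 * ψ p) * B p
        - 3 * c * Real.exp (ψ p) * (pd2 (pd2 ψ) p + 4 * (pd2 ψ p) ^ 2))
    (hRv : ∀ p ∈ U, pd2 R p = -(R p) * pd2 ψ p + 2 * (1 - c) * Real.exp (2 * ψ p) * A p
        + 3 * c * Real.exp (ψ p) * (pd1 (pd1 ψ) p + 4 * (pd1 ψ p) ^ 2)) :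
    ∀ p ∈ U, 3 * c * Real.exp (ψ p) *
      (pd1 (pd1 (pd1 ψ)) p + pd2 (pd2 (pd2 ψ)) p
        + 10 * pd1 ψ p * pd1 (pd1 ψ) p + 10 * pd2 ψ p * pd2 (pd2 ψ) p
        + 8 * ((pd1 ψ p) ^ 3 + (pd2 ψ p) ^ 3)) = 0 := by
  intro p hp
  -- differentiability facts
  have dψ : Differentiable ℝ ψ := hψ.differentiable (by norm_num)
  have dA : Differentiable ℝ A := hA.differentiable (by norm_num)
  have dB : Differentiable ℝ B := hB.differentiable (by norm_num)
  have dR : Differentiable ℝ R := hR.differentiable (by norm_num)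
  have cP1 : ContDiff ℝ 2 (pd1 ψ) :=
    (hψ.fderiv_right (m := 2) (by norm_num)).clm_apply contDiff_const
  have cP2 : ContDiff ℝ 2 (pd2 ψ) :=
    (hψ.fderiv_right (m := 2) (by norm_num)).clm_apply contDiff_const
  have dP1 : Differentiable ℝ (pd1 ψ) := cP1.differentiable (by norm_num)
  have dP2 : Differentiable ℝ (pd2 ψ) := cP2.differentiable (by norm_num)
  have dP11 : Differentiable ℝ (pd1 (pd1 ψ)) :=
    ((cP1.fderiv_right (m := 1) (by norm_num)).clm_apply contDiff_const).differentiable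
      (by norm_num)
  have dP22 : Differentiable ℝ (pd2 (pd2 ψ)) :=
    ((cP2.fderiv_right (m := 1) (by norm_num)).clm_apply contDiff_const).differentiable
      (by norm_num)
  have hmem : U ∈ nhds p := hUopen.mem_nhds hp
  -- mixed partials of R
  set F : ℝ × ℝ → ℝ := fun q => -(R q) * pd1 ψ q - 2 * (1 - c) * Real.exp (2 * ψ q) * B q
      - 3 * c * Real.exp (ψ q) * (pd2 (pd2 ψ) q + 4 * (pd2 ψ q) ^ 2) with hFdef
  set G : ℝ × ℝ → ℝ := fun q => -(R q) * pd2 ψ q + 2 * (1 - c) * Real.exp (2 * ψ q) * A q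
      + 3 * c * Real.exp (ψ q) * (pd1 (pd1 ψ) q + 4 * (pd1 ψ q) ^ 2) with hGdef
  have hFev : pd1 R =ᶠ[nhds p] F := Filter.eventuallyEq_of_mem hmem fun q hq => hRu q hq
  have hGev : pd2 R =ᶠ[nhds p] G := Filter.eventuallyEq_of_mem hmem fun q hq => hRv q hq
  have h1 : pd2 (pd1 R) p = pd2 F p := by
    show fderiv ℝ (pd1 R) p (0,1) = fderiv ℝ F p (0,1)
    rw [hFev.fderiv_eq]
  have h2 : pd1 (pd2 R) p = pd1 G p := by
    show fderiv ℝ (pd2 R) p (1,0) = fderiv ℝ G p (1,0)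
    rw [hGev.fderiv_eq]
  have e : pd2 F p = pd1 G p := by
    rw [← h1, ← h2, pd_swap hR p]
  rw [hFdef, hGdef] at e
  simp (disch := fun_prop) only [pd1_sub, pd1_add, pd1_neg, pd1_mul, pd1_const_mul, pd1_exp,
    pd1_sq, pd1_const, pd2_sub, pd2_add, pd2_neg, pd2_mul, pd2_const_mul, pd2_exp,
    pd2_sq, pd2_const] at e
  have hswapψ : pd1 (pd2 ψ) p = (1 - c) * Real.exp (2 * ψ p) :=
    (pd_swap hψ p).trans (hLiouville p hp)
  rw [hRu p hp, hRv p hp, hAu p hp, hBv p hp, hLiouville p hp, hswapψ] at e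
  linear_combination -e
end

section
/- In the flat case c = 1 with e^{2ψ} = λ'(u)μ'(v), the section w = e^{-2ψ}·ᵗ(1/λ', -1/μ', 0) satisfies dw + σw = 0, where σ is the connection matrix (4.21) with c = 1, built from ψ with ψ_{uv} = 0. -/
set_option maxHeartbeats 1000000 in
/-- In the flat case `c = 1` with `e^{2ψ} = λ'(u)μ'(v)`, the section
`w = e^{-2ψ}·ᵗ(1/λ', -1/μ', 0)` is parallel for the σ-connection (4.21):
`dw + σw = 0`. -/
theorem stmt_12 (c : ℝ) (hc : c = 1) (l m : ℝ → ℝ)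
    (hl : ContDiff ℝ 3 l) (hm : ContDiff ℝ 3 m)
    (hl' : ∀ u, 0 < deriv l u) (hm' : ∀ v, 0 < deriv m v)
    (ψ : ℝ × ℝ → ℝ)
    (hψ : ∀ q, ψ q = (1 / 2) * Real.log (deriv l q.1 * deriv m q.2))
    (w : ℝ × ℝ → Fin 3 → ℝ)
    (hw : ∀ q, w q = Real.exp (-2 * ψ q) • ![1 / deriv l q.1, -(1 / deriv m q.2), 0])
    (σ : ℝ × ℝ → ℝ × ℝ → Matrix (Fin 3) (Fin 3) ℝ)
    (hσ : ∀ q t, σ q t =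
      !![4 * pd1 ψ q * t.1 + 2 * pd2 ψ q * t.2, 0, -(Real.exp (ψ q)) * t.1;
         0, 2 * pd1 ψ q * t.1 + 4 * pd2 ψ q * t.2, Real.exp (ψ q) * t.2;
         2 * (c - 1) * Real.exp (ψ q) * t.2, -2 * (c - 1) * Real.exp (ψ q) * t.1,
           3 * (pd1 ψ q * t.1 + pd2 ψ q * t.2)]) :
    ∀ q t, fderiv ℝ w q t + (σ q t).mulVec (w q) = 0 := by
  subst hc
  intro q t
  set g := deriv l with hgdef
  set h := deriv m with hhdef
  have hlC : ContDiff ℝ ((2 : ℕ) + 1) l := by exact_mod_cast hl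
  have hmC : ContDiff ℝ ((2 : ℕ) + 1) m := by exact_mod_cast hm
  have hgC : ContDiff ℝ 2 g := (contDiff_succ_iff_deriv.mp hlC).2.2
  have hhC : ContDiff ℝ 2 h := (contDiff_succ_iff_deriv.mp hmC).2.2
  have hgd : Differentiable ℝ g := hgC.differentiable two_ne_zero
  have hhd : Differentiable ℝ h := hhC.differentiable two_ne_zero
  have hgpos : ∀ x, 0 < g x := hl'
  have hhpos : ∀ x, 0 < h x := hm'
  have ha : g q.1 ≠ 0 := (hgpos q.1).ne'
  have hb : h q.2 ≠ 0 := (hhpos q.2).ne'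
  have hab : g q.1 * h q.2 ≠ 0 := mul_ne_zero ha hb
  -- derivatives of the coordinate compositions
  have hG : HasFDerivAt (fun p : ℝ × ℝ => g p.1)
      (deriv g q.1 • ContinuousLinearMap.fst ℝ ℝ ℝ) q :=
    ((hgd q.1).hasDerivAt).comp_hasFDerivAt q (hasFDerivAt_fst)
  have hH : HasFDerivAt (fun p : ℝ × ℝ => h p.2)
      (deriv h q.2 • ContinuousLinearMap.snd ℝ ℝ ℝ) q :=
    ((hhd q.2).hasDerivAt).comp_hasFDerivAt q (hasFDerivAt_snd)
  have hGH := hG.mul hH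
  -- ψ as an explicit function
  have hψfun : ψ = fun p : ℝ × ℝ => (1 / 2) * Real.log (g p.1 * h p.2) := funext hψ
  have hψF : HasFDerivAt ψ _ q := hψfun ▸ (hGH.log hab).const_mul (1 / 2)
  have hpd1 : pd1 ψ q = 1 / 2 * (deriv g q.1 / g q.1) := by
    rw [pd1, hψF.fderiv]
    simp
    field_simp
  have hpd2 : pd2 ψ q = 1 / 2 * (deriv h q.2 / h q.2) := by
    rw [pd2, hψF.fderiv]
    simp
    field_simp
  -- w as an explicit function
  have hexp : ∀ p : ℝ × ℝ, Real.exp (-2 * ψ p) = (g p.1 * h p.2)⁻¹ := by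
    intro p
    rw [hψ p, show -2 * (1 / 2 * Real.log (g p.1 * h p.2)) = -Real.log (g p.1 * h p.2) by ring,
      Real.exp_neg, Real.exp_log (mul_pos (hgpos p.1) (hhpos p.2))]
  set φ0 : ℝ × ℝ → ℝ := fun p => (g p.1 * h p.2)⁻¹ * (g p.1)⁻¹ with hφ0
  set φ1 : ℝ × ℝ → ℝ := fun p => -((g p.1 * h p.2)⁻¹ * (h p.2)⁻¹) with hφ1
  set φ2 : ℝ × ℝ → ℝ := fun _ => (0 : ℝ) with hφ2
  have hwe : w = fun x i => ![φ0, φ1, φ2] i x := by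
    funext x i
    rw [hw x, hexp x]
    fin_cases i <;> simp [hφ0, hφ1, hφ2, one_div] <;> ring
  have hGHinv := (hasDerivAt_inv hab).comp_hasFDerivAt q hGH
  have hGinv := (hasDerivAt_inv ha).comp_hasFDerivAt q hG
  have hHinv := (hasDerivAt_inv hb).comp_hasFDerivAt q hH
  have hF0 : HasFDerivAt φ0 _ q := hGHinv.mul hGinv
  have hF1 : HasFDerivAt φ1 _ q := (hGHinv.mul hHinv).neg
  have hF2 : HasFDerivAt φ2 (0 : ℝ × ℝ →L[ℝ] ℝ) q := hasFDerivAt_const 0 q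
  have hdiff : ∀ i : Fin 3, DifferentiableAt ℝ (![φ0, φ1, φ2] i) q := by
    intro i
    fin_cases i
    · exact hF0.differentiableAt
    · exact hF1.differentiableAt
    · exact hF2.differentiableAt
  have hfd : fderiv ℝ w q = ContinuousLinearMap.pi (fun i => fderiv ℝ (![φ0, φ1, φ2] i) q) := by
    rw [hwe]
    exact fderiv_pi hdiff
  funext i
  have hwq0 : w q 0 = φ0 q := by rw [hwe]; rfl
  have hwq1 : w q 1 = φ1 q := by rw [hwe]; rfl
  have hwq2 : w q 2 = (0 : ℝ) := by rw [hwe]; rfl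
  fin_cases i
  · show fderiv ℝ w q t 0 + _ = _
    rw [hfd]
    simp only [ContinuousLinearMap.pi_apply, Matrix.cons_val_zero]
    rw [hF0.fderiv, hσ q t]
    simp [Matrix.mulVec, dotProduct, Fin.sum_univ_three, hwq0, hwq1, hwq2,
      hpd1, hpd2, hφ0, hφ1]
    field_simp
    ring
  · show fderiv ℝ w q t 1 + _ = _
    rw [hfd]
    simp only [ContinuousLinearMap.pi_apply, Matrix.cons_val_one, Matrix.head_cons, Matrix.cons_val_zero]
    rw [hF1.fderiv, hσ q t]
    simp [Matrix.mulVec, dotProduct, Fin.sum_univ_three, hwq0, hwq1, hwq2,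
      hpd1, hpd2, hφ0, hφ1]
    field_simp
    ring
  · show fderiv ℝ w q t 2 + _ = _
    rw [hfd]
    simp only [ContinuousLinearMap.pi_apply]
    rw [show (![φ0, φ1, φ2] (2 : Fin 3)) = φ2 from rfl, hF2.fderiv, hσ q t]
    simp [Matrix.mulVec, dotProduct, Fin.sum_univ_three, hwq0, hwq1, hwq2]
end

section
/- The curvature Ω^σ = dσ + σ∧σ of the connection form σ in (3.4) has vanishing first and second rows; explicitly, writing dg = ∂₁g·α¹ + ∂₂g·α² and using the structure equations dα¹ = -q₂α¹∧α², dα² = -q₁α¹∧α², together with the Gauss equations (1.17) relating dq₁, dq₂ to p₁, p₂, one obtains Ω^σ = [[0,0,0],[0,0,0],[2∂₁p₂, 2∂₂p₁, 3(p₂-p₁)]]·α¹∧α². In particular Ω^σ = 0 iff ∂₁p₂ = ∂₂p₁ = 0 and p₁ = p₂. -/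
attribute [local instance] Matrix.normedAddCommGroup Matrix.normedSpace

set_option maxHeartbeats 2000000 in
/-- The curvature `Ω^σ = dσ + σ∧σ` of the connection form `σ` of (3.4) equals
`[[0,0,0],[0,0,0],[2∂₁p₂, 2∂₂p₁, 3(p₂-p₁)]]·α¹∧α²`; in particular `Ω^σ = 0` iff
`∂₁p₂ = ∂₂p₁ = 0` and `p₁ = p₂`. Forms on `U ⊆ ℝ²` are evaluated on constant vector
fields; `dω(s,t) = ∂_s(ω(t)) - ∂_t(ω(s))` and `(ω∧τ)(s,t) = ω(s)τ(t) - ω(t)τ(s)`. -/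
theorem stmt_16 (U : Set (ℝ × ℝ)) (hU : IsOpen U)
    (a1 a2 : ℝ × ℝ → (ℝ × ℝ) →L[ℝ] ℝ)
    (q₁ q₂ p₁ p₂ d1p1 d2p1 d1p2 d2p2 : ℝ × ℝ → ℝ)
    (ha1 : ContDiff ℝ (⊤ : ℕ∞) a1) (ha2 : ContDiff ℝ (⊤ : ℕ∞) a2)
    (hq₁ : ContDiff ℝ (⊤ : ℕ∞) q₁) (hq₂ : ContDiff ℝ (⊤ : ℕ∞) q₂)
    (hp₁ : ContDiff ℝ (⊤ : ℕ∞) p₁) (hp₂ : ContDiff ℝ (⊤ : ℕ∞) p₂)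
    -- (α¹, α²) is a coframe on U
    (hcoframe : ∀ p ∈ U, ∃ s t : ℝ × ℝ, a1 p s * a2 p t - a1 p t * a2 p s ≠ 0)
    -- structure equations dα¹ = -q₂ α¹∧α², dα² = -q₁ α¹∧α²
    (hstr1 : ∀ p ∈ U, ∀ s t : ℝ × ℝ, fderiv ℝ a1 p s t - fderiv ℝ a1 p t s
        = -(q₂ p) * (a1 p s * a2 p t - a1 p t * a2 p s))
    (hstr2 : ∀ p ∈ U, ∀ s t : ℝ × ℝ, fderiv ℝ a2 p s t - fderiv ℝ a2 p t s
        = -(q₁ p) * (a1 p s * a2 p t - a1 p t * a2 p s))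
    -- dp₁ = ∂₁p₁ α¹ + ∂₂p₁ α², dp₂ = ∂₁p₂ α¹ + ∂₂p₂ α²
    (hdp1 : ∀ p ∈ U, ∀ s : ℝ × ℝ, fderiv ℝ p₁ p s = d1p1 p * a1 p s + d2p1 p * a2 p s)
    (hdp2 : ∀ p ∈ U, ∀ s : ℝ × ℝ, fderiv ℝ p₂ p s = d1p2 p * a1 p s + d2p2 p * a2 p s)
    -- Gauss equations (1.17)
    (hgauss1 : ∀ p ∈ U, ∀ s t : ℝ × ℝ,
        -2 * (fderiv ℝ q₁ p s * a1 p t - fderiv ℝ q₁ p t * a1 p s)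
        + (fderiv ℝ q₂ p s * a2 p t - fderiv ℝ q₂ p t * a2 p s)
        = (p₂ p - q₁ p * q₂ p - 1) * (a1 p s * a2 p t - a1 p t * a2 p s))
    (hgauss2 : ∀ p ∈ U, ∀ s t : ℝ × ℝ,
        -(fderiv ℝ q₁ p s * a1 p t - fderiv ℝ q₁ p t * a1 p s)
        + 2 * (fderiv ℝ q₂ p s * a2 p t - fderiv ℝ q₂ p t * a2 p s)
        = (-(p₁ p) + q₁ p * q₂ p + 1) * (a1 p s * a2 p t - a1 p t * a2 p s))
    -- the connection form σ of (3.4)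
    (σ : ℝ × ℝ → ℝ × ℝ → Matrix (Fin 3) (Fin 3) ℝ)
    (hσ : ∀ p t, σ p t =
      !![-2 * (2 * q₁ p * a1 p t - q₂ p * a2 p t), 0, -(a1 p t);
         0, -2 * (q₁ p * a1 p t - 2 * q₂ p * a2 p t), a2 p t;
         2 * (p₂ p - 1) * a2 p t, -2 * (p₁ p - 1) * a1 p t,
           -3 * (q₁ p * a1 p t - q₂ p * a2 p t)]) :
    (∀ p ∈ U, ∀ s t : ℝ × ℝ,
      fderiv ℝ (fun y => σ y t) p s - fderiv ℝ (fun y => σ y s) p t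
        + (σ p s * σ p t - σ p t * σ p s)
      = (a1 p s * a2 p t - a1 p t * a2 p s) •
          !![(0:ℝ), 0, 0; 0, 0, 0; 2 * d1p2 p, 2 * d2p1 p, 3 * (p₂ p - p₁ p)]) ∧
    ((∀ p ∈ U, ∀ s t : ℝ × ℝ,
      fderiv ℝ (fun y => σ y t) p s - fderiv ℝ (fun y => σ y s) p t
        + (σ p s * σ p t - σ p t * σ p s) = 0)
      ↔ ∀ p ∈ U, d1p2 p = 0 ∧ d2p1 p = 0 ∧ p₁ p = p₂ p) := by
  have key : ∀ p ∈ U, ∀ s t : ℝ × ℝ,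
      fderiv ℝ (fun y => σ y t) p s - fderiv ℝ (fun y => σ y s) p t
        + (σ p s * σ p t - σ p t * σ p s)
      = (a1 p s * a2 p t - a1 p t * a2 p s) •
          !![(0:ℝ), 0, 0; 0, 0, 0; 2 * d1p2 p, 2 * d2p1 p, 3 * (p₂ p - p₁ p)] := by
    intro p hp s t
    have hderiv : ∀ v w : ℝ × ℝ, fderiv ℝ (fun y => σ y w) p v =
        (fderiv ℝ a1 p v w) • (!![0,0,-1; 0,0,0; 0,2,0] : Matrix (Fin 3) (Fin 3) ℝ)
        + (fderiv ℝ a2 p v w) • (!![0,0,0; 0,0,1; -2,0,0] : Matrix (Fin 3) (Fin 3) ℝ)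
        + (q₁ p * fderiv ℝ a1 p v w + a1 p w * fderiv ℝ q₁ p v) •
            (!![-4,0,0; 0,-2,0; 0,0,-3] : Matrix (Fin 3) (Fin 3) ℝ)
        + (q₂ p * fderiv ℝ a2 p v w + a2 p w * fderiv ℝ q₂ p v) •
            (!![2,0,0; 0,4,0; 0,0,3] : Matrix (Fin 3) (Fin 3) ℝ)
        + (p₂ p * fderiv ℝ a2 p v w + a2 p w * fderiv ℝ p₂ p v) •
            (!![0,0,0; 0,0,0; 2,0,0] : Matrix (Fin 3) (Fin 3) ℝ)
        + (p₁ p * fderiv ℝ a1 p v w + a1 p w * fderiv ℝ p₁ p v) •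
            (!![0,0,0; 0,0,0; 0,-2,0] : Matrix (Fin 3) (Fin 3) ℝ) := by
      intro v w
      have hfun : (fun y => σ y w) = fun y =>
          (a1 y w) • (!![0,0,-1; 0,0,0; 0,2,0] : Matrix (Fin 3) (Fin 3) ℝ)
          + (a2 y w) • (!![0,0,0; 0,0,1; -2,0,0] : Matrix (Fin 3) (Fin 3) ℝ)
          + (q₁ y * a1 y w) • (!![-4,0,0; 0,-2,0; 0,0,-3] : Matrix (Fin 3) (Fin 3) ℝ)
          + (q₂ y * a2 y w) • (!![2,0,0; 0,4,0; 0,0,3] : Matrix (Fin 3) (Fin 3) ℝ)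
          + (p₂ y * a2 y w) • (!![0,0,0; 0,0,0; 2,0,0] : Matrix (Fin 3) (Fin 3) ℝ)
          + (p₁ y * a1 y w) • (!![0,0,0; 0,0,0; 0,-2,0] : Matrix (Fin 3) (Fin 3) ℝ) := by
        funext y
        rw [hσ]
        ext i j
        fin_cases i <;> fin_cases j <;>
          simp [Matrix.add_apply, Matrix.smul_apply, smul_eq_mul, Matrix.vecHead, Matrix.vecTail] <;> ring
      have h1 : HasFDerivAt (fun y => a1 y w)
          ((ContinuousLinearMap.apply ℝ ℝ w).comp (fderiv ℝ a1 p)) p :=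
        (ContinuousLinearMap.apply ℝ ℝ w).hasFDerivAt.comp p
          ((ha1.differentiable (by simp) p).hasFDerivAt)
      have h2 : HasFDerivAt (fun y => a2 y w)
          ((ContinuousLinearMap.apply ℝ ℝ w).comp (fderiv ℝ a2 p)) p :=
        (ContinuousLinearMap.apply ℝ ℝ w).hasFDerivAt.comp p
          ((ha2.differentiable (by simp) p).hasFDerivAt)
      have hq1d : HasFDerivAt q₁ (fderiv ℝ q₁ p) p :=
        (hq₁.differentiable (by simp) p).hasFDerivAt
      have hq2d : HasFDerivAt q₂ (fderiv ℝ q₂ p) p :=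
        (hq₂.differentiable (by simp) p).hasFDerivAt
      have hp1d : HasFDerivAt p₁ (fderiv ℝ p₁ p) p :=
        (hp₁.differentiable (by simp) p).hasFDerivAt
      have hp2d : HasFDerivAt p₂ (fderiv ℝ p₂ p) p :=
        (hp₂.differentiable (by simp) p).hasFDerivAt
      have H := ((((((h1.smul_const (!![0,0,-1; 0,0,0; 0,2,0] : Matrix (Fin 3) (Fin 3) ℝ)).add
        (h2.smul_const (!![0,0,0; 0,0,1; -2,0,0] : Matrix (Fin 3) (Fin 3) ℝ))).add
        ((hq1d.mul h1).smul_const (!![-4,0,0; 0,-2,0; 0,0,-3] : Matrix (Fin 3) (Fin 3) ℝ))).add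
        ((hq2d.mul h2).smul_const (!![2,0,0; 0,4,0; 0,0,3] : Matrix (Fin 3) (Fin 3) ℝ))).add
        ((hp2d.mul h2).smul_const (!![0,0,0; 0,0,0; 2,0,0] : Matrix (Fin 3) (Fin 3) ℝ))).add
        ((hp1d.mul h1).smul_const (!![0,0,0; 0,0,0; 0,-2,0] : Matrix (Fin 3) (Fin 3) ℝ)))
      rw [hfun]; erw [H.fderiv]
      rfl
    have e1 := hstr1 p hp s t
    have e2 := hstr2 p hp s t
    have g1 := hgauss1 p hp s t
    have g2 := hgauss2 p hp s t
    have h1s := hdp1 p hp s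
    have h1t := hdp1 p hp t
    have h2s := hdp2 p hp s
    have h2t := hdp2 p hp t
    rw [hderiv s t, hderiv t s, hσ p s, hσ p t]
    ext i j
    fin_cases i <;> fin_cases j <;>
      simp only [Matrix.mul_apply, Fin.sum_univ_three, Matrix.add_apply, Matrix.sub_apply,
        Matrix.smul_apply, smul_eq_mul, Matrix.cons_val', Matrix.cons_val_zero,
        Matrix.cons_val_one, Matrix.head_cons, Matrix.empty_val', Matrix.cons_val_fin_one,
        Matrix.head_fin_const, Matrix.tail_cons, Fin.zero_eta, Fin.mk_one,
        Fin.reduceFinMk, Fin.isValue, Matrix.of_apply, Matrix.cons_val_two]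
    · linear_combination (-4 * q₁ p) * e1 + (2 * q₂ p) * e2 + 2 * g1
    · ring
    · linear_combination -e1
    · ring
    · linear_combination (-2 * q₁ p) * e1 + (4 * q₂ p) * e2 + 2 * g2
    · linear_combination e2
    · linear_combination (2 * p₂ p - 2) * e2 + (2 * a2 p t) * h2s + (-2 * a2 p s) * h2t
    · linear_combination (2 - 2 * p₁ p) * e1 + (-2 * a1 p t) * h1s + (2 * a1 p s) * h1t
    · linear_combination (-3 * q₁ p) * e1 + (3 * q₂ p) * e2 + g1 + g2
  refine ⟨key, ?_, ?_⟩
  · intro h p hp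
    obtain ⟨s, t, hst⟩ := hcoframe p hp
    have hz : (a1 p s * a2 p t - a1 p t * a2 p s) •
        (!![(0:ℝ), 0, 0; 0, 0, 0; 2 * d1p2 p, 2 * d2p1 p, 3 * (p₂ p - p₁ p)]
          : Matrix (Fin 3) (Fin 3) ℝ) = 0 :=
      (key p hp s t).symm.trans (h p hp s t)
    rcases smul_eq_zero.1 hz with h0 | hM
    · exact absurd h0 hst
    · have e20 : (!![(0:ℝ), 0, 0; 0, 0, 0; 2 * d1p2 p, 2 * d2p1 p, 3 * (p₂ p - p₁ p)]
          : Matrix (Fin 3) (Fin 3) ℝ) 2 0 = 0 := by rw [hM]; rfl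
      have e21 : (!![(0:ℝ), 0, 0; 0, 0, 0; 2 * d1p2 p, 2 * d2p1 p, 3 * (p₂ p - p₁ p)]
          : Matrix (Fin 3) (Fin 3) ℝ) 2 1 = 0 := by rw [hM]; rfl
      have e22 : (!![(0:ℝ), 0, 0; 0, 0, 0; 2 * d1p2 p, 2 * d2p1 p, 3 * (p₂ p - p₁ p)]
          : Matrix (Fin 3) (Fin 3) ℝ) 2 2 = 0 := by rw [hM]; rfl
      simp at e20 e21 e22
      exact ⟨e20, e21, by linarith⟩
  · intro h p hp s t
    obtain ⟨h1, h2, h3⟩ := h p hp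
    rw [key p hp s t, h1, h2, h3]
    have : (!![(0:ℝ), 0, 0; 0, 0, 0; 2 * 0, 2 * 0, 3 * (p₂ p - p₂ p)]
        : Matrix (Fin 3) (Fin 3) ℝ) = 0 := by
      ext i j; fin_cases i <;> fin_cases j <;> simp [Matrix.vecHead, Matrix.vecTail]
    rw [this, smul_zero]
end
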